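/- arXiv:1706.00834 — 3 statements merged into one kernel-verified Lean document; each statement's English description precedes it below -/
import Mathlib

section
/- Let E be a nonempty finite index set, let ŵ : E → ℝ be strictly positive, and let k > 0 be a real number. Define w* : E → ℝ by w*_e = k·ŵ_e / (∑_{e'∈E} ŵ_{e'}). Then w* is nonnegative with ∑_{e∈E} w*_e = k, and for every nonnegative w : E → ℝ with ∑_{e∈E} w_e = k one has Δ(w*‖ŵ) ≤ Δ(w‖ŵ). (That is, the relative entropy projection of ŵ onto the normalization constraint {w ≥ 0 : ∑ w_e = k} is obtained by rescaling ŵ to total mass k.) -/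
/-!
Rescaling the reference vector by `c > 0` shifts `Δ(w‖·)` by an amount that depends on `w` only
through `∑ w`. Taking `c = k / ∑ ŵ`, so that `c • ŵ = w*`, and comparing two vectors of mass `k`
gives the Pythagorean identity `Δ(w‖ŵ) - Δ(w*‖ŵ) = Δ(w‖w*)`, which is nonnegative by Gibbs'
inequality.
-/

open Real Finset

/-- Unnormalized relative entropy `Δ(a‖b) = ∑ₑ (aₑ log(aₑ/bₑ) + bₑ − aₑ)`
(with the convention `0 · log 0 = 0`, automatic since `Real.log 0 = 0`). -/
noncomputable def relEnt {E : Type*} [Fintype E] (a b : E → ℝ) : ℝ :=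
  ∑ e, (a e * Real.log (a e / b e) + b e - a e)

section RelEnt

variable {E : Type*} [Fintype E]

@[simp]
lemma relEnt_self (a : E → ℝ) : relEnt a a = 0 := by
  refine Finset.sum_eq_zero fun e _ => ?_
  rcases eq_or_ne (a e) 0 with h | h <;> simp [h]

lemma relEnt_nonneg {a b : E → ℝ} (ha : ∀ e, 0 ≤ a e) (hb : ∀ e, 0 < b e) :
    0 ≤ relEnt a b := by
  refine Finset.sum_nonneg fun e _ => ?_
  have hterm : a e * log (a e / b e) + b e - a e = b e * InformationTheory.klFun (a e / b e) := by
    rw [InformationTheory.klFun]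
    field_simp [(hb e).ne']
  rw [hterm]
  exact mul_nonneg (hb e).le (InformationTheory.klFun_nonneg (div_nonneg (ha e) (hb e).le))

lemma relEnt_smul_right (a : E → ℝ) {b : E → ℝ} (hb : ∀ e, b e ≠ 0) {c : ℝ} (hc : c ≠ 0) :
    relEnt a (c • b) = relEnt a b - log c * ∑ e, a e + (c - 1) * ∑ e, b e := by
  simp only [relEnt, Pi.smul_apply, smul_eq_mul, Finset.mul_sum, ← Finset.sum_sub_distrib,
    ← Finset.sum_add_distrib]
  refine Finset.sum_congr rfl fun e _ => ?_
  have hlog : a e * log (a e / (c * b e)) = a e * log (a e / b e) - a e * log c := by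
    rcases eq_or_ne (a e) 0 with h | h
    · simp [h]
    · rw [mul_comm c, ← div_div, log_div (div_ne_zero h (hb e)) hc, mul_sub]
  rw [hlog]
  ring

end RelEnt

/-- The relative entropy projection of a positive vector `ŵ` onto the
normalization constraint `{w ≥ 0 : ∑ wₑ = k}` is obtained by rescaling `ŵ`
to total mass `k`. -/
theorem relEnt_proj_normalization
    {E : Type*} [Fintype E] [Nonempty E]
    (what : E → ℝ) (hwhat : ∀ e, 0 < what e)
    (k : ℝ) (hk : 0 < k)
    (wstar : E → ℝ)
    (hwstar : ∀ e, wstar e = k * what e / ∑ e', what e') :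
    (∀ e, 0 ≤ wstar e) ∧ (∑ e, wstar e = k) ∧
      ∀ w : E → ℝ, (∀ e, 0 ≤ w e) → (∑ e, w e = k) →
        relEnt wstar what ≤ relEnt w what := by
  set S := ∑ e, what e
  have hS : 0 < S := Finset.sum_pos (fun e _ => hwhat e) Finset.univ_nonempty
  have hc : k / S ≠ 0 := (div_pos hk hS).ne'
  have hwstar_eq : wstar = (k / S) • what := funext fun e => by
    rw [hwstar, Pi.smul_apply, smul_eq_mul]
    ring
  have hwstar_pos : ∀ e, 0 < wstar e := fun e => by
    rw [hwstar]
    exact div_pos (mul_pos hk (hwhat e)) hS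
  have hwstar_sum : ∑ e, wstar e = k := by
    simp only [hwstar_eq, Pi.smul_apply, smul_eq_mul, ← Finset.mul_sum]
    exact div_mul_cancel₀ k hS.ne'
  refine ⟨fun e => (hwstar_pos e).le, hwstar_sum, fun w hw hwk => ?_⟩
  have hw_shift := relEnt_smul_right w (fun e => (hwhat e).ne') hc
  have hwstar_shift := relEnt_smul_right wstar (fun e => (hwhat e).ne') hc
  rw [← hwstar_eq, hwk] at hw_shift
  rw [← hwstar_eq, hwstar_sum, relEnt_self] at hwstar_shift
  linarith [relEnt_nonneg hw hwstar_pos]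
end

section
/- Let V be a finite type, let r : V → V → Prop be a decidable edge relation admitting a topological ordering (there is f : V → ℕ with f(u) < f(v) whenever r v u), let w : V → V → ℝ be nonnegative edge weights, and for each v let Z(v) = ∑_{p ∈ P(v)} ∏_{edges (x,y) of p} w(x,y) be the total weight of all paths from v to the sinks; assume Z(v) > 0 for every v. Define pushed weights w'(v,u) = w(v,u)·Z(u)/Z(v) for r v u. Then: (a) for every non-sink v, ∑_{u : r v u} w'(v,u) = 1 (local normalization); (b) for every vertex s and every path p from s to a sink, ∏_{edges (x,y) of p} w'(x,y) = (∏_{edges (x,y) of p} w(x,y)) / Z(s) (product form); and consequently (c) ∑_{p ∈ P(s)} ∏_{edges of p} w' = 1, i.e., the pushed weights define a probability distribution over the paths from s to the sinks. -/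
open Finset

/-!
With `Z` the path partition function, the recursion `Z v = ∑_{r v u} w v u * Z u` at non-sinks
(and `Z = 1` at sinks) is exactly local normalization of `w' v u = w v u * Z u / Z v`.
Along a path the factors `Z u / Z v` telescope to `Z (last) / Z (first) = 1 / Z s`, since the
last vertex is a sink; summing over the paths from `s` then gives `Z s / Z s = 1`.
A path strictly decreases the topological order, so it never repeats a vertex and there are only
finitely many paths from each vertex; this is what lets the `finsum` defining `Z` (junk `0` on an
infinite set) split along the first edge.
-/

/-- `v` is a sink: it has no outgoing edges. -/
def IsSink {V : Type*} (r : V → V → Prop) (v : V) : Prop := ∀ u, ¬ r v u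

/-- `p = [v₀, v₁, …, v_m]` is a path from `v` to the sinks:
it starts at `v`, consecutive vertices are joined by edges of `r`,
and the last vertex is a sink. -/
def IsPathFrom {V : Type*} (r : V → V → Prop) (v : V) (p : List V) : Prop :=
  p.head? = some v ∧ p.Chain' r ∧ ∀ x ∈ p.getLast?, IsSink r x

/-- The weight of a path `[v₀, …, v_m]` is `∏_{i<m} w(vᵢ, vᵢ₊₁)`. -/
def pathWeight {V : Type*} (w : V → V → ℝ) (p : List V) : ℝ :=
  ((p.zip p.tail).map fun q => w q.1 q.2).prod

section WeightPushing

variable {V : Type*} {r : V → V → Prop}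

noncomputable def pathSum (r : V → V → Prop) (w : V → V → ℝ) (v : V) : ℝ :=
  ∑ᶠ p ∈ {p : List V | IsPathFrom r v p}, pathWeight w p

theorem isPathFrom_iff {v : V} {p : List V} :
    IsPathFrom r v p ↔ p.head? = some v ∧ p.IsChain r ∧ ∀ x ∈ p.getLast?, IsSink r x :=
  Iff.rfl

theorem not_isPathFrom_nil (v : V) : ¬ IsPathFrom r v [] := by
  simp [IsPathFrom]

theorem isPathFrom_singleton {v a : V} : IsPathFrom r v [a] ↔ a = v ∧ IsSink r a := by
  simp [isPathFrom_iff]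

theorem isPathFrom_cons_cons {v a u : V} {q : List V} :
    IsPathFrom r v (a :: u :: q) ↔ a = v ∧ r a u ∧ IsPathFrom r u (u :: q) := by
  simp [isPathFrom_iff, List.isChain_cons_cons, List.getLast?_cons_cons, and_assoc]

theorem IsPathFrom.exists_eq_cons {v : V} {p : List V} (hp : IsPathFrom r v p) :
    ∃ t, p = v :: t := by
  obtain _ | ⟨a, t⟩ := p
  · exact absurd hp (not_isPathFrom_nil v)
  · exact ⟨t, by rw [Option.some_inj.mp hp.1]⟩

theorem pathWeight_singleton (w : V → V → ℝ) (v : V) : pathWeight w [v] = 1 := rfl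

theorem pathWeight_cons_cons (w : V → V → ℝ) (v u : V) (q : List V) :
    pathWeight w (v :: u :: q) = w v u * pathWeight w (u :: q) := by
  simp [pathWeight]

theorem pathWeight_mul_div_cons (w : V → V → ℝ) {Z : V → ℝ} (hZ : ∀ v, Z v ≠ 0)
    (a : V) (t : List V) :
    pathWeight (fun v u => w v u * Z u / Z v) (a :: t) =
      pathWeight w (a :: t) * Z ((a :: t).getLast (List.cons_ne_nil a t)) / Z a := by
  induction t generalizing a with
  | nil => simp [pathWeight_singleton, hZ a]
  | cons u q ih =>
    rw [pathWeight_cons_cons, pathWeight_cons_cons, ih, List.getLast_cons_cons]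
    field_simp [hZ a, hZ u]

theorem IsPathFrom.pathWeight_mul_div {s : V} {p : List V} (hp : IsPathFrom r s p)
    (w : V → V → ℝ) {Z : V → ℝ} (hZ : ∀ v, Z v ≠ 0)
    (hsink : ∀ v, IsSink r v → Z v = 1) :
    pathWeight (fun v u => w v u * Z u / Z v) p = pathWeight w p / Z s := by
  obtain ⟨t, rfl⟩ := hp.exists_eq_cons
  rw [pathWeight_mul_div_cons w hZ, hsink _ (hp.2.2 _ (List.getLast?_eq_some_getLast _)), mul_one]

theorem setOf_isPathFrom_of_isSink {v : V} (hv : IsSink r v) :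
    {p : List V | IsPathFrom r v p} = {[v]} := by
  ext p
  simp only [Set.mem_ofPred_eq, Set.mem_singleton_iff]
  constructor
  · intro hp
    obtain ⟨_ | ⟨u, q⟩, rfl⟩ := hp.exists_eq_cons
    · rfl
    · exact absurd (isPathFrom_cons_cons.mp hp).2.1 (hv u)
  · rintro rfl
    exact isPathFrom_singleton.mpr ⟨rfl, hv⟩

theorem setOf_isPathFrom_of_not_isSink [Fintype V] [DecidableRel r] {v : V}
    (hv : ¬ IsSink r v) :
    {p : List V | IsPathFrom r v p} =
      ⋃ u ∈ (↑(univ.filter (r v)) : Set V),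
        List.cons v '' {q : List V | IsPathFrom r u q} := by
  ext p
  simp only [Set.mem_ofPred_eq, Set.mem_iUnion, Finset.coe_filter, Finset.mem_univ, true_and,
    Set.mem_image, exists_prop]
  constructor
  · intro hp
    obtain ⟨_ | ⟨u, q⟩, rfl⟩ := hp.exists_eq_cons
    · exact absurd (isPathFrom_singleton.mp hp).2 hv
    · obtain ⟨-, hvu, hq⟩ := isPathFrom_cons_cons.mp hp
      exact ⟨u, hvu, u :: q, hq, rfl⟩
  · rintro ⟨u, hvu, q, hq, rfl⟩
    obtain ⟨t, rfl⟩ := hq.exists_eq_cons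
    exact isPathFrom_cons_cons.mpr ⟨rfl, hvu, hq⟩

theorem setOf_isPathFrom_finite [Fintype V] {α : Type*} [Preorder α] (f : V → α)
    (hf : ∀ u v, r v u → f u < f v)
    (v : V) : {p : List V | IsPathFrom r v p}.Finite := by
  refine (List.finite_length_le V (Fintype.card V)).subset fun p hp => ?_
  have hdesc : (p.map f).IsChain (· > ·) :=
    (List.isChain_map f).mpr (hp.2.1.imp fun {a b} h => hf b a h)
  have hnodup : (p.map f).Nodup :=
    (List.isChain_iff_pairwise.mp hdesc).imp ne_of_gt
  exact (hnodup.of_map f).length_le_card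

theorem pathSum_of_isSink (w : V → V → ℝ) {v : V} (hv : IsSink r v) : pathSum r w v = 1 := by
  rw [pathSum, setOf_isPathFrom_of_isSink hv, finsum_mem_singleton, pathWeight_singleton]

theorem pathSum_of_not_isSink [Fintype V] [DecidableRel r]
    (hfin : ∀ u, {p : List V | IsPathFrom r u p}.Finite) (w : V → V → ℝ) {v : V}
    (hv : ¬ IsSink r v) :
    pathSum r w v = ∑ u ∈ univ.filter (r v), w v u * pathSum r w u := by
  have hdisj : (↑(univ.filter (r v)) : Set V).PairwiseDisjoint
      fun u => List.cons v '' {q : List V | IsPathFrom r u q} := by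
    rintro a - b - hab
    refine Set.disjoint_left.mpr ?_
    rintro _ ⟨q, hq, rfl⟩ ⟨q', hq', hqq'⟩
    obtain rfl := List.cons_injective hqq'
    exact hab (Option.some_inj.mp (hq.1.symm.trans hq'.1))
  rw [pathSum, setOf_isPathFrom_of_not_isSink hv,
    finsum_mem_biUnion hdisj (Finset.finite_toSet _)
      fun u _ => (hfin u).image _,
    finsum_mem_coe_finset]
  refine Finset.sum_congr rfl fun u _ => ?_
  rw [finsum_mem_image List.cons_injective.injOn, pathSum, mul_finsum_mem]
  refine finsum_mem_congr rfl fun q hq => ?_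
  obtain ⟨t, rfl⟩ := hq.exists_eq_cons
  exact pathWeight_cons_cons w v u t

end WeightPushing

theorem weight_pushing_general
    {V : Type*} [Fintype V]
    (r : V → V → Prop) [DecidableRel r]
    (f : V → ℕ) (hf : ∀ u v, r v u → f u < f v)
    (w : V → V → ℝ)
    (Z : V → ℝ)
    (hZ : ∀ v, Z v = ∑ᶠ p ∈ {p : List V | IsPathFrom r v p}, pathWeight w p)
    (hZpos : ∀ v, 0 < Z v)
    (w' : V → V → ℝ)
    (hw' : ∀ v u, w' v u = w v u * Z u / Z v) :
    (∀ v, ¬ IsSink r v →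
        ∑ u ∈ Finset.univ.filter (fun u => r v u), w' v u = 1) ∧
      (∀ (s : V) (p : List V), IsPathFrom r s p →
        pathWeight w' p = pathWeight w p / Z s) ∧
      (∀ s : V,
        ∑ᶠ p ∈ {p : List V | IsPathFrom r s p}, pathWeight w' p = 1) := by
  obtain rfl : Z = pathSum r w := funext hZ
  have hw'_eq : w' = fun v u => w v u * pathSum r w u / pathSum r w v := funext₂ hw'
  have hZne : ∀ v, pathSum r w v ≠ 0 := fun v => (hZpos v).ne'
  have product_form : ∀ (s : V) (p : List V), IsPathFrom r s p →
      pathWeight w' p = pathWeight w p / pathSum r w s := fun s p hp =>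
    hw'_eq ▸ hp.pathWeight_mul_div w hZne fun v hv => pathSum_of_isSink w hv
  refine ⟨fun v hv => ?_, product_form, fun s => ?_⟩
  · rw [hw'_eq, ← Finset.sum_div, ← pathSum_of_not_isSink (setOf_isPathFrom_finite f hf) w hv,
      div_self (hZne v)]
  · calc ∑ᶠ p ∈ {p : List V | IsPathFrom r s p}, pathWeight w' p
        = ∑ᶠ p ∈ {p : List V | IsPathFrom r s p}, pathWeight w p * (pathSum r w s)⁻¹ :=
          finsum_mem_congr rfl fun p hp => by rw [product_form s p hp, div_eq_mul_inv]
      _ = pathSum r w s * (pathSum r w s)⁻¹ := (finsum_mem_mul _ _).symm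
      _ = 1 := mul_inv_cancel₀ (hZne s)

/-- Generalized weight pushing on a finite DAG: with `Z(v)` the total weight
of all paths from `v` to the sinks (assumed positive everywhere), the pushed
weights `w'(v,u) = w(v,u)·Z(u)/Z(v)` are (a) locally normalized at each
non-sink, (b) in product form, giving each path from `s` weight
`(∏ w over the path)/Z(s)`, and hence (c) define a probability distribution
over the paths from `s` to the sinks. -/
theorem weight_pushing
    {V : Type*} [Fintype V] [DecidableEq V]
    (r : V → V → Prop) [DecidableRel r]
    (f : V → ℕ) (hf : ∀ u v, r v u → f u < f v)
    (w : V → V → ℝ) (hw : ∀ v u, 0 ≤ w v u)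
    (Z : V → ℝ)
    (hZ : ∀ v, Z v = ∑ᶠ p ∈ {p : List V | IsPathFrom r v p}, pathWeight w p)
    (hZpos : ∀ v, 0 < Z v)
    (w' : V → V → ℝ)
    (hw' : ∀ v u, w' v u = w v u * Z u / Z v) :
    (∀ v, ¬ IsSink r v →
        ∑ u ∈ Finset.univ.filter (fun u => r v u), w' v u = 1) ∧
      (∀ (s : V) (p : List V), IsPathFrom r s p →
        pathWeight w' p = pathWeight w p / Z s) ∧
      (∀ s : V,
        ∑ᶠ p ∈ {p : List V | IsPathFrom r s p}, pathWeight w' p = 1) :=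
  weight_pushing_general r f hf w Z hZ hZpos w' hw'
end

section
/- Let V be a finite type, let r : V → V → Prop be a decidable edge relation admitting a topological ordering (there is f : V → ℕ with f(u) < f(v) whenever r v u), and let s ∈ V be a source, i.e., no u satisfies r u s. Let w : V → V → ℝ be nonnegative with w(v,u) = 0 whenever ¬ r v u, satisfying the unit-flow constraints: ∑_{u} w(s,u) = 1, and for every vertex v other than s that is not a sink, ∑_{u} w(u,v) = ∑_{u} w(v,u) (flow conservation). Then there exist finitely many paths p₁, …, p_m from s to the sinks and coefficients λ₁, …, λ_m > 0 with ∑_i λ_i = 1 such that for every ordered pair (v,u), w(v,u) = ∑_{i : (v,u) is an edge of p_i} λ_i; moreover one can take m at most the number of pairs (v,u) with w(v,u) > 0. (Every point of the unit-flow polytope of a DAG is a convex combination of source-to-sink paths.) -/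
/-!
Induct on the number of edges of positive weight. In a flow with positive outflow at the source,
following edges of positive weight from the source must end at a sink: conservation lets the walk
leave every vertex it enters, and the topological order makes it terminate. Subtracting this path,
weighted by the smallest weight along it, leaves a flow of the same kind whose outflow has dropped
by that weight and whose support has lost at least one edge. A flow with zero outflow at the
source vanishes, since an edge of positive weight whose tail is topologically first could only
start at the source.
-/

open Finset

theorem List.IsChain.nodup_of_rank_lt {α β : Type*} [Preorder β] {r : α → α → Prop}
    {f : α → β} (hf : ∀ a b, r a b → f b < f a) {l : List α} (hl : l.IsChain r) : l.Nodup :=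
  (((isChain_map f).2 (hl.imp hf) : (l.map f).IsChain (· > ·)).pairwise.nodup).of_map f

theorem List.IsChain.rel_of_mem_zip_tail {α : Type*} {r : α → α → Prop} {l : List α}
    (hl : l.IsChain r) {a b : α} (h : (a, b) ∈ l.zip l.tail) : r a b := by
  induction l using twoStepInduction with
  | nil => simp at h
  | singleton => simp at h
  | cons_cons x y l _ ih =>
    rw [isChain_cons_cons] at hl
    simp only [tail_cons, zip_cons_cons, mem_cons, Prod.mk.injEq] at h
    rcases h with ⟨rfl, rfl⟩ | h
    · exact hl.1
    · exact ih y hl.2 h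

theorem List.sum_ite_mem_zip {α M : Type*} [Fintype α] [DecidableEq α] [AddCommMonoid M]
    {l₁ : List α} (h : l₁.Nodup) (l₂ : List α) (a : α) (c : M) :
    ∑ b, (if (a, b) ∈ l₁.zip l₂ then c else 0) = if a ∈ l₁.take l₂.length then c else 0 := by
  induction l₁ generalizing l₂ with
  | nil => simp
  | cons x l₁ ih =>
    cases l₂ with
    | nil => simp
    | cons y l₂ =>
      rw [nodup_cons] at h
      by_cases hax : a = x
      · subst hax
        have : ∀ b, (a, b) ∉ l₁.zip l₂ := fun b hb => h.1 (of_mem_zip hb).1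
        simp [this]
      · simp [hax, ih h.2]

namespace IsPathFrom

variable {V : Type*} {r : V → V → Prop} {v₀ v : V} {p : List V}

theorem singleton (hv : IsSink r v) : IsPathFrom r v [v] :=
  ⟨rfl, List.isChain_singleton v, by simpa using hv⟩

theorem cons (hp : IsPathFrom r v₀ p) (hv : r v v₀) : IsPathFrom r v (v :: p) := by
  obtain ⟨hhead, hchain, hlast⟩ := hp
  obtain ⟨t, rfl⟩ := List.head?_eq_some_iff.1 hhead
  exact ⟨rfl, List.isChain_cons_cons.2 ⟨hv, hchain⟩, by simpa using hlast⟩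

theorem nodup {f : V → ℕ} (hf : ∀ u v, r v u → f u < f v) (hp : IsPathFrom r v₀ p) : p.Nodup :=
  List.IsChain.nodup_of_rank_lt (fun a b h => hf b a h) hp.2.1

theorem zip_tail_ne_nil (hp : IsPathFrom r v₀ p) (hv₀ : ¬ IsSink r v₀) : p.zip p.tail ≠ [] := by
  obtain ⟨t, rfl⟩ := List.head?_eq_some_iff.1 hp.1
  cases t with
  | nil => exact absurd (hp.2.2 v₀ (by simp)) hv₀
  | cons => simp

theorem mem_tail_iff (hp : IsPathFrom r v₀ p) (hv : v ≠ v₀) : v ∈ p.tail ↔ v ∈ p := by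
  obtain ⟨t, rfl⟩ := List.head?_eq_some_iff.1 hp.1
  simp [hv]

theorem mem_dropLast_iff (hp : IsPathFrom r v₀ p) (hv : ¬ IsSink r v) :
    v ∈ p.dropLast ↔ v ∈ p :=
  ⟨fun h => p.dropLast_sublist.subset h, fun h =>
    List.mem_dropLast_of_mem_of_ne_getLast? h fun hlast => hv (hp.2.2 v hlast.symm)⟩

end IsPathFrom

structure IsFlowFrom {V : Type*} [Fintype V] (r : V → V → Prop) (s : V) (w : V → V → ℝ) :
    Prop where
  nonneg : ∀ v u, 0 ≤ w v u
  eq_zero_of_not_rel : ∀ v u, ¬ r v u → w v u = 0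
  inflow_eq_outflow : ∀ v, v ≠ s → ¬ IsSink r v → ∑ u, w u v = ∑ u, w v u

noncomputable def edgeSupport {V : Type*} [Fintype V] (w : V → V → ℝ) : Finset (V × V) :=
  univ.filter fun q => 0 < w q.1 q.2

def pathFlow {V : Type*} [DecidableEq V] (p : List V) (c : ℝ) (v u : V) : ℝ :=
  if (v, u) ∈ p.zip p.tail then c else 0

section

variable {V : Type*} [Fintype V] {r : V → V → Prop} {f : V → ℕ} {s : V} {w : V → V → ℝ}

theorem edgeSupport_sub_ssubset {g : V → V → ℝ} (hg : ∀ v u, 0 ≤ g v u) {v u : V}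
    (hw : 0 < w v u) (hgw : g v u = w v u) : edgeSupport (w - g) ⊂ edgeSupport w := by
  rw [Finset.ssubset_iff_of_subset]
  · exact ⟨(v, u), by simp [edgeSupport, hw, hgw]⟩
  · intro q
    simp only [edgeSupport, mem_filter, mem_univ, true_and, Pi.sub_apply]
    intro h
    linarith [hg q.1 q.2]

namespace IsFlowFrom

theorem rel_of_pos (hw : IsFlowFrom r s w) {v u : V} (h : 0 < w v u) : r v u := by
  by_contra hr
  exact h.ne' (hw.eq_zero_of_not_rel v u hr)

theorem sum_pos_of_nonempty (hf : ∀ u v, r v u → f u < f v) (hw : IsFlowFrom r s w)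
    (hne : (edgeSupport w).Nonempty) : 0 < ∑ u, w s u := by
  obtain ⟨⟨a, b⟩, hab, hmax⟩ := exists_max_image (edgeSupport w) (fun q => f q.1) hne
  replace hab : 0 < w a b := (mem_filter.1 hab).2
  have hout : 0 < ∑ u, w a u :=
    hab.trans_le (single_le_sum (fun u _ => hw.nonneg a u) (mem_univ b))
  by_cases has : a = s
  · exact has ▸ hout
  have hin : 0 < ∑ u, w u a := by
    rwa [hw.inflow_eq_outflow a has fun h => h b (hw.rel_of_pos hab)]
  obtain ⟨c, -, hca⟩ := exists_lt_of_sum_lt (f := fun _ => (0 : ℝ)) (by simpa using hin)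
  exact absurd (hmax (c, a) (mem_filter.2 ⟨mem_univ _, hca⟩)) (hf a c (hw.rel_of_pos hca)).not_ge

theorem exists_pos_path (hf : ∀ u v, r v u → f u < f v) (hs : ∀ u, ¬ r u s)
    (hw : IsFlowFrom r s w) (v : V) (hv : IsSink r v ∨ 0 < ∑ u, w v u) :
    ∃ p, IsPathFrom r v p ∧ ∀ e ∈ p.zip p.tail, 0 < w e.1 e.2 := by
  induction v using (measure f).wf.induction with
  | h v ih =>
  rcases hv with hsink | hout
  · exact ⟨[v], .singleton hsink, by simp⟩
  obtain ⟨u, -, hvu⟩ := exists_lt_of_sum_lt (f := fun _ => (0 : ℝ)) (by simpa using hout)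
  have hr := hw.rel_of_pos hvu
  have hu : IsSink r u ∨ 0 < ∑ x, w u x := or_iff_not_imp_left.2 fun hu => by
    rw [← hw.inflow_eq_outflow u (by rintro rfl; exact hs v hr) hu]
    exact hvu.trans_le (single_le_sum (fun x _ => hw.nonneg x u) (mem_univ v))
  obtain ⟨p, hp, hpos⟩ := ih u (hf u v hr) hu
  refine ⟨v :: p, hp.cons hr, ?_⟩
  obtain ⟨t, rfl⟩ := List.head?_eq_some_iff.1 hp.1
  simpa [hvu] using hpos

end IsFlowFrom

variable [DecidableEq V] {p : List V} {c : ℝ}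

theorem sum_pathFlow_left (hp : p.Nodup) (v : V) :
    ∑ u, pathFlow p c v u = if v ∈ p.dropLast then c else 0 := by
  rw [List.dropLast_eq_take, ← List.length_tail]
  exact List.sum_ite_mem_zip hp _ v c

theorem sum_pathFlow_right (hp : p.Nodup) (v : V) :
    ∑ u, pathFlow p c u v = if v ∈ p.tail then c else 0 := by
  have := List.sum_ite_mem_zip (hp.sublist p.tail_sublist) p v c
  rw [List.take_of_length_le (by simp)] at this
  rw [← this]
  refine sum_congr rfl fun u _ => ?_
  simp only [pathFlow, ← List.zip_swap p.tail p, List.mem_map_swap]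

theorem IsPathFrom.sum_sub_pathFlow_head (hf : ∀ u v, r v u → f u < f v)
    (hp : IsPathFrom r s p) (hsink : ¬ IsSink r s) :
    ∑ u, (w - pathFlow p c) s u = ∑ u, w s u - c := by
  simp only [Pi.sub_apply, sum_sub_distrib, sum_pathFlow_left (hp.nodup hf),
    hp.mem_dropLast_iff hsink, List.mem_of_mem_head? hp.1, if_true]

namespace IsFlowFrom

theorem sub_pathFlow (hf : ∀ u v, r v u → f u < f v) (hw : IsFlowFrom r s w)
    (hp : IsPathFrom r s p) (hc : ∀ e ∈ p.zip p.tail, c ≤ w e.1 e.2) :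
    IsFlowFrom r s (w - pathFlow p c) where
  nonneg v u := by
    simp only [Pi.sub_apply, pathFlow]
    split_ifs with h
    · linarith [hc _ h]
    · linarith [hw.nonneg v u]
  eq_zero_of_not_rel v u hvu := by
    have : (v, u) ∉ p.zip p.tail := fun h => hvu (hp.2.1.rel_of_mem_zip_tail h)
    simp [pathFlow, this, hw.eq_zero_of_not_rel v u hvu]
  inflow_eq_outflow v hvs hv := by
    simp only [Pi.sub_apply, sum_sub_distrib, sum_pathFlow_left (hp.nodup hf),
      sum_pathFlow_right (hp.nodup hf), hw.inflow_eq_outflow v hvs hv, hp.mem_tail_iff hvs,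
      hp.mem_dropLast_iff hv]

theorem exists_sub_pathFlow (hf : ∀ u v, r v u → f u < f v) (hs : ∀ u, ¬ r u s)
    (hw : IsFlowFrom r s w) (hne : (edgeSupport w).Nonempty) :
    ∃ p c, IsPathFrom r s p ∧ 0 < c ∧ IsFlowFrom r s (w - pathFlow p c) ∧
      edgeSupport (w - pathFlow p c) ⊂ edgeSupport w ∧
      ∑ u, (w - pathFlow p c) s u = ∑ u, w s u - c := by
  have hout := hw.sum_pos_of_nonempty hf hne
  have hsink : ¬ IsSink r s := fun h =>
    hout.ne' (sum_eq_zero fun u _ => hw.eq_zero_of_not_rel s u (h u))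
  obtain ⟨p, hp, hpos⟩ := hw.exists_pos_path hf hs s (Or.inr hout)
  obtain ⟨e, he, hmin⟩ := (p.zip p.tail).toFinset.exists_min_image (fun e => w e.1 e.2)
    (List.toFinset_nonempty_iff _ |>.2 (hp.zip_tail_ne_nil hsink))
  have hc : 0 < w e.1 e.2 := hpos e (List.mem_toFinset.1 he)
  refine ⟨p, w e.1 e.2, hp, hc,
    hw.sub_pathFlow hf hp fun e' he' => hmin e' (List.mem_toFinset.2 he'), ?_,
    hp.sum_sub_pathFlow_head hf hsink⟩
  exact edgeSupport_sub_ssubset (fun _ _ => by unfold pathFlow; split_ifs <;> linarith) hc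
    (if_pos (List.mem_toFinset.1 he))

theorem exists_path_decomposition (hf : ∀ u v, r v u → f u < f v) (hs : ∀ u, ¬ r u s)
    (hw : IsFlowFrom r s w) :
    ∃ (m : ℕ) (paths : Fin m → List V) (lam : Fin m → ℝ),
      (∀ i, IsPathFrom r s (paths i)) ∧ (∀ i, 0 < lam i) ∧ ∑ i, lam i = ∑ u, w s u ∧
      (∀ v u, w v u = ∑ i ∈ univ.filter fun i => (v, u) ∈ (paths i).zip (paths i).tail, lam i) ∧
      m ≤ (edgeSupport w).card := by
  induction hn : (edgeSupport w).card using Nat.strong_induction_on generalizing w with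
  | _ n ih =>
  rcases (edgeSupport w).eq_empty_or_nonempty with hempty | hne
  · have hzero : ∀ v u, w v u = 0 := fun v u => (hw.nonneg v u).antisymm' <| not_lt.1 fun h =>
      eq_empty_iff_forall_notMem.1 hempty (v, u) (by simp [edgeSupport, h])
    exact ⟨0, Fin.elim0, Fin.elim0, fun i => i.elim0, fun i => i.elim0, by simp [hzero],
      by simp [hzero], n.zero_le⟩
  obtain ⟨p, c, hp, hc, hw', hsub, hout⟩ := hw.exists_sub_pathFlow hf hs hne
  obtain ⟨m, paths, lam, hpaths, hlam, hsum, hrep, hm⟩ := ih _ (hn ▸ card_lt_card hsub) hw' rfl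
  refine ⟨m + 1, Fin.cons p paths, Fin.cons c lam, Fin.cases hp hpaths, Fin.cases hc hlam,
    ?_, fun v u => ?_, ?_⟩
  · rw [Fin.sum_cons, hsum, hout, add_sub_cancel]
  · simp only [sum_filter, Fin.sum_univ_succ, Fin.cons_zero, Fin.cons_succ]
    rw [← sum_filter, ← hrep, Pi.sub_apply]
    exact (add_sub_cancel _ _).symm
  · have := card_lt_card hsub
    omega

end IsFlowFrom

end

theorem unit_flow_decomposition_general
    {V : Type*} [Fintype V] [DecidableEq V]
    (r : V → V → Prop)
    (f : V → ℕ) (hf : ∀ u v, r v u → f u < f v)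
    (s : V) (hs : ∀ u, ¬ r u s)
    (w : V → V → ℝ) (hw : ∀ v u, 0 ≤ w v u)
    (hsupp : ∀ v u, ¬ r v u → w v u = 0)
    (hsrc : ∑ u, w s u = 1)
    (hcons : ∀ v, v ≠ s → ¬ IsSink r v → ∑ u, w u v = ∑ u, w v u) :
    ∃ (m : ℕ) (paths : Fin m → List V) (lam : Fin m → ℝ),
      (∀ i, IsPathFrom r s (paths i)) ∧
      (∀ i, 0 < lam i) ∧
      (∑ i, lam i = 1) ∧
      (∀ v u : V, w v u =
        ∑ i ∈ Finset.univ.filter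
          (fun i => (v, u) ∈ (paths i).zip (paths i).tail), lam i) ∧
      m ≤ ((Finset.univ : Finset (V × V)).filter
            (fun q => 0 < w q.1 q.2)).card := by
  obtain ⟨m, paths, lam, hpaths, hlam, hsum, hrep, hm⟩ :=
    IsFlowFrom.exists_path_decomposition hf hs ⟨hw, hsupp, hcons⟩
  exact ⟨m, paths, lam, hpaths, hlam, hsum.trans hsrc, hrep, hm⟩

/-- Path decomposition of the unit-flow polytope of a finite DAG:
every nonnegative edge-weight vector supported on the edges, with unit
outflow at the source `s` and flow conservation at every intermediate
non-sink vertex, is a convex combination of (indicator vectors of) paths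
from `s` to the sinks, using at most as many paths as there are edges of
positive weight. -/
theorem unit_flow_decomposition
    {V : Type*} [Fintype V] [DecidableEq V]
    (r : V → V → Prop) [DecidableRel r]
    (f : V → ℕ) (hf : ∀ u v, r v u → f u < f v)
    (s : V) (hs : ∀ u, ¬ r u s)
    (w : V → V → ℝ) (hw : ∀ v u, 0 ≤ w v u)
    (hsupp : ∀ v u, ¬ r v u → w v u = 0)
    (hsrc : ∑ u, w s u = 1)
    (hcons : ∀ v, v ≠ s → ¬ IsSink r v → ∑ u, w u v = ∑ u, w v u) :
    ∃ (m : ℕ) (paths : Fin m → List V) (lam : Fin m → ℝ),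
      (∀ i, IsPathFrom r s (paths i)) ∧
      (∀ i, 0 < lam i) ∧
      (∑ i, lam i = 1) ∧
      (∀ v u : V, w v u =
        ∑ i ∈ Finset.univ.filter
          (fun i => (v, u) ∈ (paths i).zip (paths i).tail), lam i) ∧
      m ≤ ((Finset.univ : Finset (V × V)).filter
            (fun q => 0 < w q.1 q.2)).card :=
  unit_flow_decomposition_general r f hf s hs w hw hsupp hsrc hcons
end
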